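/- Let n ≥ 1, let d be an even integer with 2 ≤ d ≤ 2n+2, and let α, β ∈ F. The sum of the deformations (R̃_α, t, j) and (R̃_β, t, j) of R = F[u]/(u^{n+1}) is isomorphic, as a deformation of R, to (R̃_{α+β}, t, j). -/

import Mathlib

/-- A finite-dimensional graded-commutative ℤ-graded `F`-algebra
("graded F-algebra" in the sense of Seidel's paper). -/
structure GradedFAlg (F : Type) [Field F] where
  carrier : Type
  [ring : Ring carrier]
  [alg : Algebra F carrier]
  grading : ℤ → Submodule F carrier
  [gradedAlgebra : GradedAlgebra grading]
  [findim : FiniteDimensional F carrier]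
  gcomm : ∀ (i j : ℤ) (x y : carrier), x ∈ grading i → y ∈ grading j →
    x * y = ((-1 : F) ^ (i * j)) • (y * x)

attribute [instance] GradedFAlg.ring GradedFAlg.alg GradedFAlg.gradedAlgebra GradedFAlg.findim

variable {F : Type} [Field F]

/-- A homomorphism of graded `F`-algebras. -/
structure GradedFAlg.Hom (A B : GradedFAlg F) where
  toAlgHom : A.carrier →ₐ[F] B.carrier
  graded : ∀ (i : ℤ) (x : A.carrier), x ∈ A.grading i → toAlgHom x ∈ B.grading i

/-- The identity homomorphism of graded `F`-algebras. -/
def GradedFAlg.Hom.id (A : GradedFAlg F) : GradedFAlg.Hom A A :=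
  ⟨AlgHom.id F A.carrier, fun _ _ h => h⟩

/-- A `d`-dimensional (first order infinitesimal) deformation `(R̃, t, j)` of `A`:
`t ∈ R̃^d` with `t² = 0` whose annihilator is exactly `t·R̃`, and `j : R̃ → A`
a surjective homomorphism of graded algebras with kernel `t·R̃`. -/
structure Deformation (F : Type) [Field F] (A : GradedFAlg F) (d : ℤ) where
  alg : GradedFAlg F
  t : alg.carrier
  t_mem : t ∈ alg.grading d
  t_sq : t * t = 0
  t_ann : ∀ x : alg.carrier, t * x = 0 ↔ ∃ y : alg.carrier, x = t * y
  j : GradedFAlg.Hom alg A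
  j_surj : Function.Surjective j.toAlgHom
  j_ker : ∀ x : alg.carrier, j.toAlgHom x = 0 ↔ ∃ y : alg.carrier, x = t * y

/-- A morphism of deformations over a homomorphism `f` of graded `F`-algebras. -/
structure DefMorphismOver {A B : GradedFAlg F} (f : GradedFAlg.Hom A B) {d : ℤ}
    (D1 : Deformation F A d) (D2 : Deformation F B d) where
  toHom : GradedFAlg.Hom D1.alg D2.alg
  map_t : toHom.toAlgHom D1.t = D2.t
  over_ : ∀ x, D2.j.toAlgHom (toHom.toAlgHom x) = f.toAlgHom (D1.j.toAlgHom x)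

/-- Two deformations of `A` are isomorphic if there is a bijective morphism of
deformations (i.e. a morphism over the identity of `A`) between them. -/
def Deformation.Iso {A : GradedFAlg F} {d : ℤ} (D1 D2 : Deformation F A d) : Prop :=
  ∃ φ : DefMorphismOver (GradedFAlg.Hom.id A) D1 D2, Function.Bijective φ.toHom.toAlgHom
theorem Deformation.j_t {A : GradedFAlg F} {d : ℤ} (D : Deformation F A d) :
    D.j.toAlgHom D.t = 0 := (D.j_ker D.t).mpr ⟨1, (mul_one D.t).symm⟩

/-- The subalgebra `Δ ⊆ R̃₁ × R̃₂` of pairs `(x₁, x₂)` with `j₁ x₁ = j₂ x₂`. -/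
def sumSubalg {A : GradedFAlg F} {d : ℤ} (D1 D2 : Deformation F A d) :
    Subalgebra F (D1.alg.carrier × D2.alg.carrier) :=
  AlgHom.equalizer (D1.j.toAlgHom.comp (AlgHom.fst F D1.alg.carrier D2.alg.carrier))
    (D2.j.toAlgHom.comp (AlgHom.snd F D1.alg.carrier D2.alg.carrier))

/-- The element `(t₁, 0)` of `Δ`. -/
def sumT1 {A : GradedFAlg F} {d : ℤ} (D1 D2 : Deformation F A d) : sumSubalg D1 D2 :=
  ⟨(D1.t, 0), by show _ = _; simp [Deformation.j_t]⟩

/-- The element `(0, t₂)` of `Δ`. -/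
def sumT2 {A : GradedFAlg F} {d : ℤ} (D1 D2 : Deformation F A d) : sumSubalg D1 D2 :=
  ⟨(0, D2.t), by show _ = _; simp [Deformation.j_t]⟩

/-- The element `(t₁, -t₂)` of `Δ`. -/
def sumTT {A : GradedFAlg F} {d : ℤ} (D1 D2 : Deformation F A d) : sumSubalg D1 D2 :=
  ⟨(D1.t, -D2.t), by show _ = _; simp [Deformation.j_t]⟩

/-- `D` realizes the sum of the deformations `D1` and `D2`: there is a surjective
algebra homomorphism `π : Δ → D.alg`, compatible with the gradings, with kernel
`(t₁, -t₂)·Δ`, sending the class of `(t₁,0)` and of `(0,t₂)` to `t`, and lying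
over `j₁` (equivalently `j₂`). -/
def IsSumOf {A : GradedFAlg F} {d : ℤ} (D1 D2 D : Deformation F A d) : Prop :=
  ∃ π : ↥(sumSubalg D1 D2) →ₐ[F] D.alg.carrier,
    Function.Surjective π ∧
    (∀ (i : ℤ) (z : sumSubalg D1 D2), z.val.1 ∈ D1.alg.grading i →
      z.val.2 ∈ D2.alg.grading i → π z ∈ D.alg.grading i) ∧
    π (sumT1 D1 D2) = D.t ∧
    π (sumT2 D1 D2) = D.t ∧
    (∀ z, π z = 0 ↔ ∃ w, z = sumTT D1 D2 * w) ∧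
    (∀ z : sumSubalg D1 D2, D.j.toAlgHom (π z) = D1.j.toAlgHom z.val.1)

/-- `R` is (a model of) the cohomology `F[u]/(u^{n+1})` of `ℂPⁿ`: `u` has
degree `2`, `u^{n+1} = 0`, and `1, u, …, uⁿ` is an `F`-basis of `R`. -/
structure IsCPnAlg (R : GradedFAlg F) (u : R.carrier) (n : ℕ) : Prop where
  u_mem : u ∈ R.grading 2
  u_pow : u ^ (n + 1) = 0
  basis : ∃ b : Module.Basis (Fin (n + 1)) F R.carrier, ∀ i : Fin (n + 1), b i = u ^ (i : ℕ)

/-- The deformation `D` of `R = F[u]/(u^{n+1})` "is" the deformation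
`R̃_α = F[ũ, t]/(ũ^{n+1} + α·t·ũ^{n+1-d/2}, t²)` with `j(ũ) = u`, `j(t) = 0`:
it contains an element `ũ` of degree `2` lifting `u` and satisfying the defining
relation. (These data determine `R̃_α` up to isomorphism of deformations.) -/
structure IsRAlphaDef (R : GradedFAlg F) (u : R.carrier) (n : ℕ) (d : ℤ) (α : F)
    (D : Deformation F R d) (ut : D.alg.carrier) : Prop where
  mem : ut ∈ D.alg.grading 2
  j_u : D.j.toAlgHom ut = u
  rel : ut ^ (n + 1) + α • (D.t * ut ^ ((n : ℤ) + 1 - d / 2).toNat) = 0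

/-!
The lift of `u` to the sum is the class of the pair `(ũ₁, ũ₂) ∈ Δ`. In `Δ` the relations of
`R̃_α` and `R̃_β` combine, componentwise, into
`(ũ₁, ũ₂)^{n+1} + α (t₁, 0)(ũ₁, ũ₂)^k + β (0, t₂)(ũ₁, ũ₂)^k = 0`, and in the quotient both
`(t₁, 0)` and `(0, t₂)` become `t`, which turns this into the relation of `R̃_{α+β}`.
-/

section

variable {A : GradedFAlg F} {d : ℤ} {D1 D2 D : Deformation F A d}

theorem map_rel_of_map_sumT {π : ↥(sumSubalg D1 D2) →ₐ[F] D.alg.carrier}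
    (hT1 : π (sumT1 D1 D2) = D.t) (hT2 : π (sumT2 D1 D2) = D.t)
    {z : sumSubalg D1 D2} {m k : ℕ} {α β : F}
    (hz : z ^ m + α • (sumT1 D1 D2 * z ^ k) + β • (sumT2 D1 D2 * z ^ k) = 0) :
    π z ^ m + (α + β) • (D.t * π z ^ k) = 0 := by
  have h := congrArg π hz
  simp only [map_add, map_smul, map_mul, map_pow, map_zero, hT1, hT2] at h
  rwa [add_smul, ← add_assoc]

end

namespace IsRAlphaDef

variable {R : GradedFAlg F} {u : R.carrier} {n : ℕ} {d : ℤ} {α β : F}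
  {D1 D2 : Deformation F R d} {ut1 : D1.alg.carrier} {ut2 : D2.alg.carrier}

def pair (h1 : IsRAlphaDef R u n d α D1 ut1) (h2 : IsRAlphaDef R u n d β D2 ut2) :
    sumSubalg D1 D2 :=
  ⟨(ut1, ut2), h1.j_u.trans h2.j_u.symm⟩

theorem pair_rel (h1 : IsRAlphaDef R u n d α D1 ut1) (h2 : IsRAlphaDef R u n d β D2 ut2) :
    h1.pair h2 ^ (n + 1) + α • (sumT1 D1 D2 * h1.pair h2 ^ ((n : ℤ) + 1 - d / 2).toNat)
      + β • (sumT2 D1 D2 * h1.pair h2 ^ ((n : ℤ) + 1 - d / 2).toNat) = 0 := by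
  refine Subtype.ext (Prod.ext ?_ ?_)
  · show ut1 ^ (n + 1) + α • (D1.t * ut1 ^ _) + β • ((0 : D1.alg.carrier) * ut1 ^ _) = 0
    rw [zero_mul, smul_zero, add_zero]
    exact h1.rel
  · show ut2 ^ (n + 1) + α • ((0 : D2.alg.carrier) * ut2 ^ _) + β • (D2.t * ut2 ^ _) = 0
    rw [zero_mul, smul_zero, add_zero]
    exact h2.rel

end IsRAlphaDef

theorem sum_of_Ralpha_Rbeta_general
    {F : Type} [Field F] (R : GradedFAlg F) (u : R.carrier) (n : ℕ)
    (d : ℤ) (α β : F)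
    (D1 D2 D : Deformation F R d) (ut1 : D1.alg.carrier) (ut2 : D2.alg.carrier)
    (h1 : IsRAlphaDef R u n d α D1 ut1) (h2 : IsRAlphaDef R u n d β D2 ut2)
    (hsum : IsSumOf D1 D2 D) :
    ∃ ut : D.alg.carrier, IsRAlphaDef R u n d (α + β) D ut := by
  obtain ⟨π, -, hgr, hT1, hT2, -, hover⟩ := hsum
  exact ⟨π (h1.pair h2), hgr 2 _ h1.mem h2.mem, (hover _).trans h1.j_u,
    map_rel_of_map_sumT hT1 hT2 (h1.pair_rel h2)⟩

/-- Let `R = F[u]/(u^{n+1})` with `deg u = 2`, `n ≥ 1`, `d` even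
with `2 ≤ d ≤ 2n+2`, and `α, β ∈ F`. The sum of the deformations `(R̃_α, t, j)`
and `(R̃_β, t, j)` of `R` is isomorphic, as a deformation of `R`, to
`(R̃_{α+β}, t, j)`: any deformation realizing the sum is itself a model of
`R̃_{α+β}`. -/
theorem sum_of_Ralpha_Rbeta
    {F : Type} [Field F] (R : GradedFAlg F) (u : R.carrier) (n : ℕ) (hn : 1 ≤ n)
    (hR : IsCPnAlg R u n)
    (d : ℤ) (heven : Even d) (hd2 : 2 ≤ d) (hd : d ≤ 2 * (n : ℤ) + 2) (α β : F)
    (D1 D2 D : Deformation F R d) (ut1 : D1.alg.carrier) (ut2 : D2.alg.carrier)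
    (h1 : IsRAlphaDef R u n d α D1 ut1) (h2 : IsRAlphaDef R u n d β D2 ut2)
    (hsum : IsSumOf D1 D2 D) :
    ∃ ut : D.alg.carrier, IsRAlphaDef R u n d (α + β) D ut :=
  sum_of_Ralpha_Rbeta_general R u n d α β D1 D2 D ut1 ut2 h1 h2 hsum
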